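/- Symmetrization identity: let ω ∈ L¹(ℝ²) ∩ L^∞(ℝ²) with compact support, v = K * ω, and φ ∈ C¹_c(ℝ², ℝ²). Then ∫_{ℝ²} ω(x) v(x)^⊥ · φ(x) dx = ∬_{ℝ²×ℝ²} ω(x) ω(y) H̄_φ(x,y) dx dy, where H̄_φ(x,y) = (1/2) K(x−y)^⊥ · (φ(x) − φ(y)). -/

import Mathlib

/-!
Put `G(x, y) = ω(x) ω(y) K(x - y)`. Since `|K(x)| = 1 / (2π|x|)` is locally integrable in the
plane and `ω` is bounded with compact support, `G` is integrable on `ℝ² × ℝ²`, and Fubini turns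
the left-hand side into `∬ G(x, y)^⊥ · φ(x)`. As `K` is odd, `G(y, x) = -G(x, y)`, so averaging
this integral with its image under `(x, y) ↦ (y, x)` gives `∬ G(x, y)^⊥ · (φ(x) - φ(y)) / 2`.
-/

open MeasureTheory Real
open scoped RealInnerProductSpace

noncomputable def biotSavart (x : EuclideanSpace ℝ (Fin 2)) : EuclideanSpace ℝ (Fin 2) :=
  (2 * Real.pi * ‖x‖ ^ 2)⁻¹ • (WithLp.toLp 2 ![-(x 1), x 0] : EuclideanSpace ℝ (Fin 2))

def perp (a : EuclideanSpace ℝ (Fin 2)) : EuclideanSpace ℝ (Fin 2) :=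
  (WithLp.toLp 2 ![-(a 1), a 0] : EuclideanSpace ℝ (Fin 2))

noncomputable def Hbar (φ : EuclideanSpace ℝ (Fin 2) → EuclideanSpace ℝ (Fin 2))
    (x y : EuclideanSpace ℝ (Fin 2)) : ℝ :=
  (1 / 2 : ℝ) * ⟪perp (biotSavart (x - y)), φ x - φ y⟫

open Set
open scoped Pointwise

namespace MeasureTheory

section

variable {X E : Type*} [TopologicalSpace X] [T2Space X] [MeasurableSpace X] [OpensMeasurableSpace X]
  [NormedAddCommGroup E] [NormedSpace ℝ E] {μ : Measure X} {ω : X → ℝ} {k : X → E} {M : ℝ}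

theorem LocallyIntegrable.integrable_smul_of_bdd_of_hasCompactSupport
    (hk : LocallyIntegrable k μ) (hω : AEStronglyMeasurable ω μ) (hbdd : ∀ x, |ω x| ≤ M)
    (hsupp : HasCompactSupport ω) :
    Integrable (fun x => ω x • k x) μ := by
  have hk' : Integrable ((tsupport ω).indicator k) μ :=
    (integrable_indicator_iff hsupp.measurableSet).2 (hk.integrableOn_isCompact hsupp)
  refine (hk'.bdd_smul M hω (.of_forall hbdd)).congr (.of_forall fun x => ?_)
  by_cases hx : x ∈ tsupport ω
  · simp [indicator_of_mem hx]
  · simp [image_eq_zero_of_notMem_tsupport hx]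

end

section

variable {G E : Type*} [NormedAddCommGroup G] [SecondCountableTopology G] [MeasurableSpace G]
  [BorelSpace G] [NormedAddCommGroup E] [NormedSpace ℝ E] {μ : Measure G} [SFinite μ]
  [μ.IsAddRightInvariant] {ω : G → ℝ} {k : G → E} {M : ℝ}

theorem integrable_prod_smul_comp_sub (hk : LocallyIntegrable k μ) (hω : Integrable ω μ)
    (hbdd : ∀ x, |ω x| ≤ M) (hsupp : HasCompactSupport ω) :
    Integrable (fun p : G × G => (ω p.1 * ω p.2) • k (p.1 - p.2)) (μ.prod μ) := by
  -- Where the integrand is nonzero, `p.1 - p.2` lies in the compact set `tsupport ω - tsupport ω`,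
  -- so `k` may be cut off there; what remains is a bounded factor times a convolution integrand.
  have hS : IsCompact (tsupport ω - tsupport ω) := by
    rw [← sub_image_prod]; exact (hsupp.prod hsupp).image continuous_sub
  set S := tsupport ω - tsupport ω
  have hkS : Integrable (S.indicator k) μ :=
    (integrable_indicator_iff hS.measurableSet).2 (hk.integrableOn_isCompact hS)
  have hconv := hω.convolution_integrand (ContinuousLinearMap.lsmul ℝ ℝ) hkS
  refine (hconv.bdd_smul M hω.aestronglyMeasurable.comp_fst (.of_forall fun p => hbdd p.1)).congr
    (.of_forall fun p => ?_)
  by_cases hp : p.1 ∈ tsupport ω ∧ p.2 ∈ tsupport ω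
  · have hpS : p.1 - p.2 ∈ S := sub_mem_sub hp.1 hp.2
    simp [indicator_of_mem hpS, smul_smul]
  · rcases not_and_or.1 hp with h | h <;> simp [image_eq_zero_of_notMem_tsupport h]

end

theorem integral_prod_symmetrize {α E : Type*} [MeasurableSpace α] {μ : Measure α} [SFinite μ]
    [NormedAddCommGroup E] [NormedSpace ℝ E] {f : α × α → E} (hf : Integrable f (μ.prod μ)) :
    ∫ p, (2⁻¹ : ℝ) • (f p + f p.swap) ∂μ.prod μ = ∫ p, f p ∂μ.prod μ := by
  have hswap : Integrable (fun p => f p.swap) (μ.prod μ) := hf.swap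
  rw [integral_smul, integral_add hf hswap, integral_prod_swap f, ← two_smul ℝ, smul_smul,
    inv_mul_cancel₀ two_ne_zero, one_smul]

end MeasureTheory

local notation "E²" => EuclideanSpace ℝ (Fin 2)

noncomputable def perpCLM : E² →L[ℝ] E² :=
  LinearMap.toContinuousLinearMap
    { toFun := perp
      map_add' a b := by ext i; fin_cases i <;> simp [perp, add_comm]
      map_smul' c a := by ext i; fin_cases i <;> simp [perp] }

@[simp] lemma perpCLM_apply (a : E²) : perpCLM a = perp a := rfl

lemma perp_neg (a : E²) : perp (-a) = -perp a := map_neg perpCLM a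

lemma perp_smul (c : ℝ) (a : E²) : perp (c • a) = c • perp a := map_smul perpCLM c a

lemma norm_perp (a : E²) : ‖perp a‖ = ‖a‖ := by
  simp [EuclideanSpace.norm_eq, perp, Fin.sum_univ_two, add_comm]

lemma biotSavart_eq_smul_perp (x : E²) : biotSavart x = (2 * π * ‖x‖ ^ 2)⁻¹ • perp x := rfl

lemma biotSavart_neg (x : E²) : biotSavart (-x) = -biotSavart x := by
  simp [biotSavart_eq_smul_perp, perp_neg]

lemma norm_biotSavart (x : E²) : ‖biotSavart x‖ = (2 * π)⁻¹ * ‖x‖⁻¹ := by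
  rw [biotSavart_eq_smul_perp, norm_smul, norm_perp, norm_inv, Real.norm_of_nonneg (by positivity)]
  field_simp

lemma measurable_biotSavart : Measurable biotSavart := by
  simp_rw [funext biotSavart_eq_smul_perp, ← perpCLM_apply]
  fun_prop

lemma locallyIntegrable_biotSavart : LocallyIntegrable biotSavart volume := by
  refine locallyIntegrable_of_norm_le_rpow (C := (2 * π)⁻¹) (α := 1) (by simp) (by simp)
    (.of_forall fun x => ?_) measurable_biotSavart.aestronglyMeasurable
  rw [norm_biotSavart, Real.rpow_neg_one]

theorem symmetrization_identity
    (ω : EuclideanSpace ℝ (Fin 2) → ℝ) (hω : Integrable ω volume)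
    (M : ℝ) (hbdd : ∀ x, |ω x| ≤ M) (hωsupp : HasCompactSupport ω)
    (φ : EuclideanSpace ℝ (Fin 2) → EuclideanSpace ℝ (Fin 2))
    (hφ : ContDiff ℝ 1 φ) (hsupp : HasCompactSupport φ)
    (v : EuclideanSpace ℝ (Fin 2) → EuclideanSpace ℝ (Fin 2))
    (hv : ∀ x, v x = ∫ y, ω y • biotSavart (x - y)) :
    (∫ x, ω x * ⟪perp (v x), φ x⟫) =
      ∫ p : EuclideanSpace ℝ (Fin 2) × EuclideanSpace ℝ (Fin 2),
        ω p.1 * ω p.2 * Hbar φ p.1 p.2 ∂(volume.prod volume) := by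
  let B : E² →L[ℝ] E² →L[ℝ] ℝ := (innerSL ℝ).comp perpCLM
  let f : E² × E² → ℝ := fun p => B ((ω p.1 * ω p.2) • biotSavart (p.1 - p.2)) (φ p.1)
  obtain ⟨C, hC⟩ := hφ.continuous.bounded_above_of_compact_support hsupp
  have hf : Integrable f (volume.prod volume) :=
    B.integrable_of_bilin_of_bdd_right C
      (integrable_prod_smul_comp_sub locallyIntegrable_biotSavart hω hbdd hωsupp)
      (hφ.continuous.comp continuous_fst).aestronglyMeasurable (.of_forall fun p => hC p.1)
  have hfubini (x : E²) : ω x * ⟪perp (v x), φ x⟫ = ∫ y, f (x, y) := by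
    have hx : Integrable (fun y => ω y • biotSavart (x - y)) := by
      simpa using (locallyIntegrable_biotSavart.integrable_smul_of_bdd_of_hasCompactSupport
        (hω.comp_sub_left x).aestronglyMeasurable (fun z => hbdd (x - z))
        (hωsupp.comp_homeomorph (Homeomorph.subLeft x))).comp_sub_left x
    calc ω x * ⟪perp (v x), φ x⟫ = ω x * B.flip (φ x) (∫ y, ω y • biotSavart (x - y)) := by
          rw [hv x]; rfl
      _ = ∫ y, f (x, y) := by
          rw [← (B.flip (φ x)).integral_comp_comm hx, ← integral_const_mul]
          simp [f, mul_smul]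
  have hsymm (p : E² × E²) : ω p.1 * ω p.2 * Hbar φ p.1 p.2 = (2⁻¹ : ℝ) • (f p + f p.swap) := by
    simp only [f, Prod.fst_swap, Prod.snd_swap]
    rw [← neg_sub p.1 p.2, biotSavart_neg]
    simp [B, Hbar, perp_neg, perp_smul, inner_sub_right]
    ring
  simp_rw [hfubini, hsymm, integral_integral (f := fun x y => f (x, y)) hf,
    integral_prod_symmetrize hf]
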